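/- There exists a four-player partnership domino game that ends with one player playing the last tile of their hand, in which the winning team (the team of that player) scores 111 points; in particular, it is possible to win a whole game (reach at least 100 points) in a single round. -/

import Mathlib

/-- A domino tile is an unordered pair of values in `{0,…,6}`. -/
abbrev Tile := Sym2 (Fin 7)

/-- The pip sum of the tile `[a,b]` is `a + b`. -/
def pips (t : Tile) : ℕ :=
  Sym2.lift ⟨fun (a b : Fin 7) => (a : ℕ) + (b : ℕ), fun a b => Nat.add_comm a b⟩ t

/-- The board: the chain of already played tiles, as a list of oriented tiles
concatenated left to right (consecutive tiles match end to end). -/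
abbrev Board := List (Fin 7 × Fin 7)

/-- The total pip sum of the tiles on a board. -/
def boardPips (b : Board) : ℕ := (b.map fun p => (p.1 : ℕ) + (p.2 : ℕ)).sum

/-- A tile `t` can extend a (nonempty) board `b` when `t` contains one of the two
open ends of `b`. -/
def canExtend (b : Board) (t : Tile) : Prop :=
  b ≠ [] ∧ (b.head!.1 ∈ t ∨ b.getLast!.2 ∈ t)

/-- The total pip sum of a hand of tiles. -/
def handPips (h : Finset Tile) : ℕ := ∑ t ∈ h, pips t

/-- A game state: the board of already played tiles, the four remaining hands, and
whose turn it is. -/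
structure GState where
  board : Board
  hands : Fin 4 → Finset Tile
  turn : Fin 4

/-- Players `0` and `2` form team `false`; players `1` and `3` form team `true`. -/
def playerTeam (i : Fin 4) : Bool := decide ((i : ℕ) % 2 = 1)

/-- The total pip sum remaining in the hands of the two players of a team. -/
def GState.teamPips (s : GState) (tm : Bool) : ℕ :=
  if tm then handPips (s.hands 1) + handPips (s.hands 3)
  else handPips (s.hands 0) + handPips (s.hands 2)

/-- A single legal move of the game (the game is still running, i.e. all hands are
nonempty).  The player to move either plays a tile from their hand — the first tile
played starts the chain, and every later tile is appended, suitably oriented, to one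
of the two open ends of the chain — or passes, which is permitted only if no tile
remaining in their hand contains either open end of the chain. -/
inductive Step : GState → GState → Prop
  | playFirst (s : GState) (p : Fin 7 × Fin 7)
      (hrun : ∀ i, s.hands i ≠ ∅)
      (hb : s.board = [])
      (ht : Sym2.mk p.1 p.2 ∈ s.hands s.turn) :
      Step s ⟨[p],
        Function.update s.hands s.turn ((s.hands s.turn).erase (Sym2.mk p.1 p.2)),
        s.turn + 1⟩
  | playLeft (s : GState) (p : Fin 7 × Fin 7)
      (hrun : ∀ i, s.hands i ≠ ∅)
      (hb : s.board ≠ [])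
      (ht : Sym2.mk p.1 p.2 ∈ s.hands s.turn)
      (hfit : p.2 = s.board.head!.1) :
      Step s ⟨p :: s.board,
        Function.update s.hands s.turn ((s.hands s.turn).erase (Sym2.mk p.1 p.2)),
        s.turn + 1⟩
  | playRight (s : GState) (p : Fin 7 × Fin 7)
      (hrun : ∀ i, s.hands i ≠ ∅)
      (hb : s.board ≠ [])
      (ht : Sym2.mk p.1 p.2 ∈ s.hands s.turn)
      (hfit : p.1 = s.board.getLast!.2) :
      Step s ⟨s.board ++ [p],
        Function.update s.hands s.turn ((s.hands s.turn).erase (Sym2.mk p.1 p.2)),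
        s.turn + 1⟩
  | pass (s : GState)
      (hrun : ∀ i, s.hands i ≠ ∅)
      (hb : s.board ≠ [])
      (hcant : ∀ t ∈ s.hands s.turn, ¬ canExtend s.board t) :
      Step s ⟨s.board, s.hands, s.turn + 1⟩

/-- A four-player partnership domino game: a partition of the 28 domino tiles into
four initial hands of 7 tiles each, together with a legal play sequence of states;
player 1 (index `0`) moves first, and players move cyclically. -/
structure Game where
  initHands : Fin 4 → Finset Tile
  card_initHands : ∀ i, (initHands i).card = 7
  disj_initHands : ∀ i j, i ≠ j → Disjoint (initHands i) (initHands j)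
  cover_initHands : ∀ t : Tile, ∃ i, t ∈ initHands i
  states : List GState
  states_ne : states ≠ []
  head_states : states.head states_ne = ⟨[], initHands, 0⟩
  chain_states : states.Chain' Step

/-- The final position of a game. -/
def Game.finalState (g : Game) : GState := g.states.getLast g.states_ne

/-- A position is blocked if at least one tile has been played and no player's
remaining hand contains a tile containing either open end of the chain. -/
def IsBlocked (s : GState) : Prop :=
  s.board ≠ [] ∧ ∀ i : Fin 4, ∀ t ∈ s.hands i, ¬ canExtend s.board t

/-- A game ends blocked if its final position is blocked. -/
def Game.EndsBlocked (g : Game) : Prop := IsBlocked g.finalState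

/-- Team `tm` plays at least one tile during the game: at some turn the player to move
belongs to team `tm` and the board changes (a tile is placed). -/
def Game.teamPlays (g : Game) (tm : Bool) : Prop :=
  ∃ (i : ℕ) (h : i + 1 < g.states.length),
    playerTeam ((g.states.get ⟨i, by omega⟩).turn) = tm ∧
    (g.states.get ⟨i + 1, h⟩).board ≠ (g.states.get ⟨i, by omega⟩).board

/-!
An explicit game. Player 2 is dealt `[3,3],[3,4],[3,5],[3,6],[4,4],[4,5],[4,6]` and player 4
`[1,5],[1,6],[2,5],[2,6],[5,5],[5,6],[6,6]`. Players 1 and 3 keep leaving open ends that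
the opponents cannot match, except once, when player 4 plays `[2,5]`; player 1 goes out while
the opponents still hold `57 + 54 = 111` pips.
-/

inductive Move
  | first (p : Fin 7 × Fin 7)
  | left (p : Fin 7 × Fin 7)
  | right (p : Fin 7 × Fin 7)
  | pass

instance (b : Board) (t : Tile) : Decidable (canExtend b t) :=
  inferInstanceAs (Decidable (_ ∧ _))

namespace GState

def play (s : GState) : Move → GState
  | .first p =>
    ⟨[p], Function.update s.hands s.turn ((s.hands s.turn).erase s(p.1, p.2)), s.turn + 1⟩
  | .left p =>
    ⟨p :: s.board, Function.update s.hands s.turn ((s.hands s.turn).erase s(p.1, p.2)),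
      s.turn + 1⟩
  | .right p =>
    ⟨s.board ++ [p], Function.update s.hands s.turn ((s.hands s.turn).erase s(p.1, p.2)),
      s.turn + 1⟩
  | .pass => ⟨s.board, s.hands, s.turn + 1⟩

def IsLegal (s : GState) : Move → Prop
  | .first p => (∀ i, s.hands i ≠ ∅) ∧ s.board = [] ∧ s(p.1, p.2) ∈ s.hands s.turn
  | .left p => (∀ i, s.hands i ≠ ∅) ∧ s.board ≠ [] ∧ s(p.1, p.2) ∈ s.hands s.turn ∧
      p.2 = s.board.head!.1
  | .right p => (∀ i, s.hands i ≠ ∅) ∧ s.board ≠ [] ∧ s(p.1, p.2) ∈ s.hands s.turn ∧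
      p.1 = s.board.getLast!.2
  | .pass => (∀ i, s.hands i ≠ ∅) ∧ s.board ≠ [] ∧
      ∀ t ∈ s.hands s.turn, ¬ canExtend s.board t

instance (s : GState) (m : Move) : Decidable (s.IsLegal m) := by
  cases m <;> unfold IsLegal <;> infer_instance

theorem step_play {s : GState} : ∀ {m : Move}, s.IsLegal m → Step s (s.play m)
  | .first p, ⟨hrun, hb, ht⟩ => .playFirst s p hrun hb ht
  | .left p, ⟨hrun, hb, ht, hfit⟩ => .playLeft s p hrun hb ht hfit
  | .right p, ⟨hrun, hb, ht, hfit⟩ => .playRight s p hrun hb ht hfit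
  | .pass, ⟨hrun, hb, hcant⟩ => .pass s hrun hb hcant

def trace (s : GState) : List Move → List GState
  | [] => [s]
  | m :: ms => s :: (s.play m).trace ms

def IsLegalSeq (s : GState) : List Move → Prop
  | [] => True
  | m :: ms => s.IsLegal m ∧ (s.play m).IsLegalSeq ms

instance (s : GState) (ms : List Move) : Decidable (s.IsLegalSeq ms) := by
  induction ms generalizing s with
  | nil => exact inferInstanceAs (Decidable True)
  | cons m ms ih => exact @instDecidableAnd _ _ _ (ih _)

theorem trace_ne_nil (s : GState) (ms : List Move) : s.trace ms ≠ [] := by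
  cases ms <;> simp [trace]

theorem head_trace (s : GState) (ms : List Move) (h : s.trace ms ≠ []) :
    (s.trace ms).head h = s := by
  cases ms <;> rfl

theorem isChain_trace {s : GState} {ms : List Move} (h : s.IsLegalSeq ms) :
    (s.trace ms).IsChain Step := by
  induction ms generalizing s with
  | nil => exact List.isChain_singleton s
  | cons m ms ih =>
    cases ms with
    | nil => exact List.IsChain.cons_cons (step_play h.1) (List.isChain_singleton _)
    | cons m' ms' => exact List.IsChain.cons_cons (step_play h.1) (ih h.2)

theorem getLast_trace (s : GState) (ms : List Move) (h : s.trace ms ≠ []) :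
    (s.trace ms).getLast h = ms.foldl play s := by
  induction ms generalizing s with
  | nil => rfl
  | cons m ms ih =>
    show (s :: (s.play m).trace ms).getLast _ = _
    rw [List.getLast_cons (trace_ne_nil _ _), ih, List.foldl_cons]

end GState

namespace Game

variable (H : Fin 4 → Finset Tile) (hcard : ∀ i, (H i).card = 7)
  (hdisj : ∀ i j, i ≠ j → Disjoint (H i) (H j)) (hcover : ∀ t : Tile, ∃ i, t ∈ H i)
  (ms : List Move) (hms : GState.IsLegalSeq ⟨[], H, 0⟩ ms)

def ofMoves : Game where
  initHands := H
  card_initHands := hcard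
  disj_initHands := hdisj
  cover_initHands := hcover
  states := GState.trace ⟨[], H, 0⟩ ms
  states_ne := GState.trace_ne_nil _ _
  head_states := GState.head_trace _ _ _
  chain_states := GState.isChain_trace hms

theorem finalState_ofMoves :
    (ofMoves H hcard hdisj hcover ms hms).finalState = ms.foldl GState.play ⟨[], H, 0⟩ :=
  GState.getLast_trace _ _ _

end Game

def deal111 : Fin 4 → Finset Tile :=
  ![{s(0, 0), s(0, 2), s(0, 3), s(0, 5), s(0, 6), s(1, 2), s(1, 4)},
    {s(3, 3), s(3, 4), s(3, 5), s(3, 6), s(4, 4), s(4, 5), s(4, 6)},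
    {s(0, 1), s(0, 4), s(1, 1), s(1, 3), s(2, 2), s(2, 3), s(2, 4)},
    {s(1, 5), s(1, 6), s(2, 5), s(2, 6), s(5, 5), s(5, 6), s(6, 6)}]

def moves111 : List Move :=
  [.first (1, 2), .pass, .left (1, 1), .right (2, 5), .right (5, 0), .pass, .left (0, 1), .pass,
   .right (0, 0), .pass, .right (0, 4), .pass, .right (4, 1), .pass, .right (1, 3), .pass,
   .right (3, 0), .pass, .pass, .pass, .left (2, 0), .pass, .left (3, 2), .pass, .right (0, 6)]

def game111 : Game :=
  Game.ofMoves deal111 (by decide) (by decide) (by decide) moves111 (by decide)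

theorem finalState_game111_hands :
    game111.finalState.hands = ![∅, deal111 1, {s(2, 2), s(2, 4)}, deal111 3 \ {s(2, 5)}] := by
  rw [game111, Game.finalState_ofMoves]
  decide

/-- There exists a four-player partnership domino game that ends with one player
playing the last tile of their hand, in which the winning team (the team of that
player) scores 111 points — the score being the total pip sum of the tiles remaining
in the two hands of the opposing team.  In particular, since 100 ≤ 111, it is
possible to win a whole game (reach at least 100 points) in a single round. -/
theorem exists_game_domino_out_score_111 :
    ∃ (g : Game) (i : Fin 4),
      g.finalState.hands i = ∅ ∧
      g.finalState.teamPips (!(playerTeam i)) = 111 ∧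
      100 ≤ g.finalState.teamPips (!(playerTeam i)) := by
  have hout : game111.finalState.hands 0 = ∅ := by
    rw [finalState_game111_hands]
    rfl
  have hscore : game111.finalState.teamPips (!(playerTeam 0)) = 111 := by
    simp only [GState.teamPips, finalState_game111_hands]
    decide
  exact ⟨game111, 0, hout, hscore, by omega⟩
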